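/- Let (G, +) be a commutative group and let d be a function from the subsets of G to the real interval [0, 1] such that d(a + B) = d(B) for every a ∈ G and B ⊆ G, and such that whenever x_1 + B, …, x_n + B are pairwise disjoint translates of a set B ⊆ G one has d((x_1 + B) ∪ ⋯ ∪ (x_n + B)) = n·d(B). Let S ⊆ G satisfy 0 ∈ S, S = −S, and d(S) > 0. Then there is a subgroup E of G such that for every integer l with l·d(S) ≥ 2, the l-fold sumset lS = S + S + ⋯ + S (l times) equals E. -/

import Mathlib

/-- The `l`-fold sumset `S + S + ⋯ + S` (`l` times). -/
def kFoldSum {G : Type} [AddCommMonoid G] (S : Set G) (k : ℕ) : Set G :=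
  {z | ∃ f : Fin k → G, (∀ i, f i ∈ S) ∧ ∑ i, f i = z}

/-!
Suppose `x ∈ (l+1)S \ lS`, say `x = s₀ + ⋯ + s_l`. Repeat the summands periodically and let
`q₀ = 0, q₁, q₂, …` be the partial sums, so that `q_{u+l+1} = q_u + x`. If `3 ≤ v - u ≤ 2l - 1`
then `q_v - q_u ∉ 2S = S - S`, for otherwise `x` would be a sum of at most `l` elements of `S`.
Hence the translates `q_{3i} + S` with `3i ≤ 2l - 1` are pairwise disjoint; there are more
than `l/2` of them, which forces `l·d(S) < 2`. So the sumsets `lS` are constant once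
`l·d(S) ≥ 2`, and a sumset `lS = 2lS` of a symmetric set is a subgroup.
-/

open Pointwise Finset

lemma kFoldSum_eq_nsmul {G : Type} [AddCommMonoid G] (S : Set G) (k : ℕ) :
    kFoldSum S k = k • S :=
  Set.ext fun _ ↦ Set.mem_nsmul_iff_sum.symm

lemma Function.Periodic.sum_Ico_add_eq {M : Type*} [AddCancelCommMonoid M] {g : ℕ → M} {L : ℕ}
    (hg : Function.Periodic g L) (u : ℕ) :
    ∑ k ∈ Ico u (u + L), g k = ∑ k ∈ range L, g k := by
  induction u with
  | zero => rw [zero_add, range_eq_Ico]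
  | succ u ih =>
    have htop := sum_Ico_succ_top (f := g) (Nat.le_add_right u L)
    have hbot := sum_eq_sum_Ico_succ_bot (f := g) (Nat.lt_succ_of_le (Nat.le_add_right u L))
    rw [hg u] at htop
    rw [add_right_comm, ← ih]
    exact add_left_cancel (hbot.symm.trans (htop.trans (add_comm _ _)))

section Sumsets

variable {G : Type*}

lemma sum_Ico_mem_nsmul [AddCommMonoid G] {S : Set G} {g : ℕ → G} (hg : ∀ k, g k ∈ S)
    (u v : ℕ) : ∑ k ∈ Ico u v, g k ∈ (v - u) • S := by
  simpa using Set.finsetSum_mem_finsetSum (Ico u v) (fun _ ↦ S) g fun k _ ↦ hg k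

lemma nsmul_eq_of_le [AddMonoid G] {S : Set G} (hS0 : 0 ∈ S) {l : ℕ}
    (hstep : ∀ n, l ≤ n → (n + 1) • S ⊆ n • S) {m : ℕ} (hm : l ≤ m) : m • S = l • S := by
  induction m, hm using Nat.le_induction with
  | base => rfl
  | succ n hn ih =>
    rw [← ih]
    exact (hstep n hn).antisymm (Set.nsmul_subset_nsmul_right hS0 n.le_succ)

variable [AddCommGroup G] {S : Set G}

lemma exists_addSubgroup_coe_eq_nsmul (hS0 : 0 ∈ S) (hS : -S = S) {n : ℕ}
    (hn : (n + n) • S = n • S) : ∃ E : AddSubgroup G, (E : Set G) = n • S :=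
  ⟨{ carrier := n • S
     add_mem' := fun ha hb ↦ hn ▸ add_nsmul S n n ▸ Set.add_mem_add ha hb
     zero_mem' := Set.zero_mem_nsmul hS0
     neg_mem' := fun ha ↦ by
       rw [← hS, neg_nsmul]
       exact Set.neg_mem_neg.2 ha }, rfl⟩

lemma disjoint_add_image_of_sub_notMem (hS : -S = S) {a b : G} (h : b - a ∉ 2 • S) :
    Disjoint ((a + ·) '' S) ((b + ·) '' S) := by
  rw [Set.disjoint_left]
  rintro _ ⟨s, hs, rfl⟩ ⟨t, ht, hts⟩
  simp only at hts
  refine h ?_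
  rw [sub_eq_sub_iff_add_eq_add.2 (hts.trans (add_comm a s)), sub_eq_add_neg, two_nsmul]
  exact Set.add_mem_add hs (hS ▸ Set.neg_mem_neg.2 ht)

lemma sum_Ico_notMem_two_nsmul (hS0 : 0 ∈ S) (hS : -S = S) {g : ℕ → G} (hg : ∀ k, g k ∈ S)
    {l : ℕ} (hper : Function.Periodic g (l + 1)) (hx : ∑ k ∈ range (l + 1), g k ∉ l • S)
    {u v : ℕ} (huv : u + 3 ≤ v) (hvu : v + 1 ≤ u + 2 * l) : ∑ k ∈ Ico u v, g k ∉ 2 • S := by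
  intro h
  refine hx ?_
  rw [← hper.sum_Ico_add_eq u]
  rcases le_total v (u + (l + 1)) with hv | hv
  · rw [← sum_Ico_consecutive g (by omega) hv]
    refine Set.nsmul_subset_nsmul_right hS0 (by omega : 2 + (u + (l + 1) - v) ≤ l) ?_
    rw [add_nsmul]
    exact Set.add_mem_add h (sum_Ico_mem_nsmul hg _ _)
  · rw [eq_sub_of_add_eq (sum_Ico_consecutive g (by omega) hv)]
    refine Set.nsmul_subset_nsmul_right hS0 (by omega : 2 + (v - (u + (l + 1))) ≤ l) ?_
    rw [add_nsmul, sub_eq_add_neg]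
    refine Set.add_mem_add h ?_
    rw [← hS, neg_nsmul]
    exact Set.neg_mem_neg.2 (sum_Ico_mem_nsmul hg _ _)

lemma exists_pairwise_disjoint_translates (hS0 : 0 ∈ S) (hS : -S = S) {l : ℕ} {x : G}
    (hx : x ∈ (l + 1) • S) (hxl : x ∉ l • S) :
    ∃ y : Fin ((2 * l + 2) / 3) → G,
      Pairwise fun i j ↦ Disjoint ((y i + ·) '' S) ((y j + ·) '' S) := by
  obtain ⟨f, hf, rfl⟩ := Set.mem_nsmul_iff_sum.1 hx
  set g : ℕ → G := fun k ↦ f ⟨k % (l + 1), Nat.mod_lt _ l.succ_pos⟩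
  have hper : Function.Periodic g (l + 1) := fun k ↦ by simp only [g, Nat.add_mod_right]
  have hsum : ∑ k ∈ range (l + 1), g k = ∑ i, f i := by
    rw [← Fin.sum_univ_eq_sum_range]
    exact sum_congr rfl fun i _ ↦ by simp only [g, Nat.mod_eq_of_lt i.isLt]
  refine ⟨fun i ↦ ∑ k ∈ range (3 * i), g k, ?_⟩
  have hsep : ∀ i j : Fin ((2 * l + 2) / 3), i < j →
      Disjoint ((∑ k ∈ range (3 * i), g k + ·) '' S) ((∑ k ∈ range (3 * j), g k + ·) '' S) := by
    intro i j hij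
    have hij : (i : ℕ) < j := hij
    refine disjoint_add_image_of_sub_notMem hS ?_
    rw [← sum_Ico_eq_sub g (by omega)]
    exact sum_Ico_notMem_two_nsmul hS0 hS (fun _ ↦ hf _) hper (hsum ▸ hxl) (by omega) (by omega)
  intro i j hij
  rcases hij.lt_or_gt with h | h
  exacts [hsep i j h, (hsep j i h).symm]

end Sumsets

lemma nsmul_succ_subset_nsmul_of_two_le_mul {G : Type*} [AddCommGroup G] (d : Set G → ℝ)
    (hle : ∀ A, d A ≤ 1)
    (hdisj : ∀ (B : Set G) (n : ℕ) (x : Fin n → G),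
      (∀ i j, i ≠ j → Disjoint ((x i + ·) '' B) ((x j + ·) '' B)) →
      d (⋃ i, (x i + ·) '' B) = n * d B)
    {S : Set G} (hS0 : 0 ∈ S) (hS : -S = S) {l : ℕ} (hl : 2 ≤ (l : ℝ) * d S) :
    (l + 1) • S ⊆ l • S := by
  intro x hx
  by_contra hxl
  obtain ⟨y, hy⟩ := exists_pairwise_disjoint_translates hS0 hS hx hxl
  have hN : (((2 * l + 2) / 3 : ℕ) : ℝ) * d S ≤ 1 := by
    rw [← hdisj S _ y fun i j hij ↦ hy hij]
    exact hle _
  have hl1 : 1 ≤ l := by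
    rcases l with _ | l
    · norm_num at hl
    · omega
  have hlN : (l : ℝ) < 2 * ((2 * l + 2) / 3 : ℕ) := by
    exact_mod_cast (by omega : l < 2 * ((2 * l + 2) / 3))
  nlinarith

theorem symmetric_sumsets_stabilize_general {G : Type} [AddCommGroup G]
    (d : Set G → ℝ)
    (hrange : ∀ A : Set G, d A ∈ Set.Icc (0 : ℝ) 1)
    (hdisj : ∀ (B : Set G) (n : ℕ) (x : Fin n → G),
      (∀ i j, i ≠ j → Disjoint ((x i + ·) '' B) ((x j + ·) '' B)) →
      d (⋃ i, (x i + ·) '' B) = n * d B)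
    (S : Set G) (h0 : (0 : G) ∈ S) (hsymm : S = {g : G | -g ∈ S}) (hd : 0 < d S) :
    ∃ E : AddSubgroup G, ∀ l : ℕ, 2 ≤ (l : ℝ) * d S → kFoldSum S l = (E : Set G) := by
  have hS : -S = S := hsymm.symm
  have hstable : ∀ l m : ℕ, 2 ≤ (l : ℝ) * d S → l ≤ m → m • S = l • S := fun l m hl hlm ↦
    nsmul_eq_of_le h0 (fun n hn ↦ nsmul_succ_subset_nsmul_of_two_le_mul d (fun A ↦ (hrange A).2)
      hdisj h0 hS (hl.trans (by gcongr))) hlm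
  set l₀ := ⌈2 / d S⌉₊
  have hl₀ : 2 ≤ (l₀ : ℝ) * d S := (div_le_iff₀ hd).1 (Nat.le_ceil _)
  obtain ⟨E, hE⟩ := exists_addSubgroup_coe_eq_nsmul h0 hS (hstable l₀ (l₀ + l₀) hl₀ (by omega))
  refine ⟨E, fun l hl ↦ ?_⟩
  rw [kFoldSum_eq_nsmul, hE, ← hstable l (l + l₀) hl (by omega),
    hstable l₀ (l + l₀) hl₀ (by omega)]

/-- Let `G` be a commutative group and `d` a `[0,1]`-valued function on subsets of `G`
which is translation invariant and additive on pairwise disjoint finite unions of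
translates of a single set.  If `S ⊆ G` satisfies `0 ∈ S`, `S = −S` and `d(S) > 0`,
then there is a subgroup `E` of `G` with `lS = E` for every integer `l` with
`l·d(S) ≥ 2`. -/
theorem symmetric_sumsets_stabilize {G : Type} [AddCommGroup G]
    (d : Set G → ℝ)
    (hrange : ∀ A : Set G, d A ∈ Set.Icc (0 : ℝ) 1)
    (htrans : ∀ (a : G) (B : Set G), d ((a + ·) '' B) = d B)
    (hdisj : ∀ (B : Set G) (n : ℕ) (x : Fin n → G),
      (∀ i j, i ≠ j → Disjoint ((x i + ·) '' B) ((x j + ·) '' B)) →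
      d (⋃ i, (x i + ·) '' B) = n * d B)
    (S : Set G) (h0 : (0 : G) ∈ S) (hsymm : S = {g : G | -g ∈ S}) (hd : 0 < d S) :
    ∃ E : AddSubgroup G, ∀ l : ℕ, 2 ≤ (l : ℝ) * d S → kFoldSum S l = (E : Set G) :=
  symmetric_sumsets_stabilize_general d hrange hdisj S h0 hsymm hd
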